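/- arXiv:2301.12007 — 7 statements merged into one kernel-verified Lean document; each statement's English description precedes it below -/
import Mathlib

section
/- If X is an n×n positive semidefinite symmetric real matrix, then the vector x̄ with x̄_1 = trace(X) = Σ_i X_{ii} and x̄_j = 2 X_{1j} for j = 2,...,n lies in the second-order cone, i.e., Σ_i X_{ii} ≥ sqrt((2X_{12})^2 + ... + (2X_{1n})^2). -/
open Matrix Finset

/-- The arrow-head (Lorentz) matrix transformation of a vector in ℝ^(n+1). -/
noncomputable def Arw {n : ℕ} (x : Fin (n + 1) → ℝ) : Matrix (Fin (n + 1)) (Fin (n + 1)) ℝ :=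
  Matrix.of fun i j =>
    if i = 0 then (if j = 0 then x 0 else x j)
    else if j = 0 then x i
    else if i = j then x 0 else 0

/-- Euclidean norm of the tail (x_2, ..., x_n) of a vector in ℝ^(n+1). -/
noncomputable def tailNorm {n : ℕ} (x : Fin (n + 1) → ℝ) : ℝ :=
  Real.sqrt (∑ j : Fin n, x j.succ ^ 2)

lemma psd_entry_sq {n : ℕ} (X : Matrix (Fin (n+1)) (Fin (n+1)) ℝ) (hX : X.PosSemidef)
    (i j : Fin (n+1)) : (X i j)^2 ≤ X i i * X j j := by
  have hdiag : ∀ k, 0 ≤ X k k := by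
    intro k
    have := hX.dotProduct_mulVec_nonneg (Pi.single k 1)
    simpa [Matrix.mulVec_single, single_dotProduct] using this
  rcases eq_or_ne i j with rfl | hij
  · nlinarith [hdiag i]
  · have hsym : X j i = X i j := by
      have := congrFun (congrFun hX.1 j) i
      simpa using this.symm
    have key : ∀ a : ℝ, 0 ≤ X i i * (a * a) + (2 * X i j) * a + X j j := by
      intro a
      have h := hX.dotProduct_mulVec_nonneg (a • (Pi.single i 1 : Fin (n+1) → ℝ) + Pi.single j 1)
      simp only [star_trivial, Matrix.mulVec_add, Matrix.mulVec_smul,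
        Matrix.mulVec_single, dotProduct_add, add_dotProduct,
        smul_dotProduct, dotProduct_smul, single_dotProduct,
        Pi.smul_apply, Pi.add_apply, Pi.single_apply, smul_eq_mul, mul_one] at h
      simp [hij, hij.symm, hsym] at h
      nlinarith [h]
    have := discrim_le_zero key
    simp only [discrim] at this
    nlinarith

/-- If X is PSD then the vector (trace X, 2X₁₂, ..., 2X₁ₙ) lies in the second-order cone. -/
theorem psd_to_lorentz {n : ℕ} (X : Matrix (Fin (n + 1)) (Fin (n + 1)) ℝ)
    (hX : X.PosSemidef) :
    Real.sqrt (∑ j : Fin n, (2 * X 0 j.succ) ^ 2) ≤ X.trace := by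
  have hdiag : ∀ k, 0 ≤ X k k := by
    intro k
    have := hX.dotProduct_mulVec_nonneg (Pi.single k 1)
    simpa [Matrix.mulVec_single, single_dotProduct] using this
  set a := X 0 0 with ha
  set T := ∑ j : Fin n, X j.succ j.succ with hT
  have hTnn : 0 ≤ T := Finset.sum_nonneg fun j _ => hdiag _
  have htr : X.trace = a + T := by
    rw [Matrix.trace]
    simp [Matrix.diag, Fin.sum_univ_succ, ha, hT]
  have hsum : (∑ j : Fin n, (2 * X 0 j.succ) ^ 2) ≤ (a + T) ^ 2 := by
    have h1 : (∑ j : Fin n, (2 * X 0 j.succ) ^ 2) ≤ ∑ j : Fin n, 4 * (a * X j.succ j.succ) := by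
      refine Finset.sum_le_sum fun j _ => ?_
      have := psd_entry_sq X hX 0 j.succ
      nlinarith
    have h2 : ∑ j : Fin n, 4 * (a * X j.succ j.succ) = 4 * (a * T) := by
      simp [hT, Finset.mul_sum, mul_assoc]
    nlinarith [hdiag 0, hTnn, sq_nonneg (a - T)]
  calc Real.sqrt (∑ j : Fin n, (2 * X 0 j.succ) ^ 2)
      ≤ Real.sqrt ((a + T) ^ 2) := Real.sqrt_le_sqrt hsum
    _ = a + T := Real.sqrt_sq (by linarith [hdiag 0])
    _ = X.trace := htr.symm
end

section
/- Let x ∈ R^n with x ≠ 0 and x_1 ≥ ‖x_{2:n}‖_2, and set δ = sqrt(x_1^2 − ‖x_{2:n}‖_2^2) and β = (1/sqrt(2(x_1 + δ))) · (x_1 + δ, x_2, ..., x_n)^T. Then the rank-one matrix X = β β^T satisfies Σ_{i=1}^n X_{ii} = x_1 and X_{1j} = x_j/2 for j = 2, ..., n. -/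
open Matrix Finset

/-- The rank-one matrix X = ββᵀ built from a nonzero x in the second-order cone
satisfies the admissibility conditions: trace X = x₁ and X₁ⱼ = xⱼ/2 for j ≥ 2. -/
theorem rank_one_map_admissible {n : ℕ} (x : Fin (n + 1) → ℝ)
    (hx0 : x ≠ 0) (hx : tailNorm x ≤ x 0) :
    let δ := Real.sqrt ((x 0) ^ 2 - (tailNorm x) ^ 2)
    let β : Fin (n + 1) → ℝ :=
      fun i => (1 / Real.sqrt (2 * (x 0 + δ))) * (if i = 0 then x 0 + δ else x i)
    (Matrix.vecMulVec β β).trace = x 0 ∧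
      ∀ j : Fin (n + 1), j ≠ 0 → Matrix.vecMulVec β β 0 j = x j / 2 := by
  intro δ β
  set t := tailNorm x with ht_def
  have ht0 : 0 ≤ t := Real.sqrt_nonneg _
  have hx00 : 0 ≤ x 0 := le_trans ht0 hx
  -- x 0 > 0
  have hx0pos : 0 < x 0 := by
    rcases lt_or_eq_of_le hx00 with h | h
    · exact h
    · exfalso
      have ht : t = 0 := le_antisymm (h ▸ hx) ht0
      have hsum : (∑ j : Fin n, x j.succ ^ 2) = 0 := by
        have hnn : 0 ≤ ∑ j : Fin n, x j.succ ^ 2 :=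
          Finset.sum_nonneg fun j _ => sq_nonneg _
        have := Real.sqrt_eq_zero hnn |>.mp ht
        exact this
      apply hx0
      funext i
      refine Fin.cases ?_ ?_ i
      · exact h.symm
      · intro j
        have := (Finset.sum_eq_zero_iff_of_nonneg
          (fun j _ => sq_nonneg (x j.succ))).mp hsum j (Finset.mem_univ j)
        exact pow_eq_zero_iff (two_ne_zero).elim |>.mp (by simpa using this)
  have hδ0 : 0 ≤ δ := Real.sqrt_nonneg _
  have hsumnn : 0 ≤ ∑ j : Fin n, x j.succ ^ 2 :=
    Finset.sum_nonneg fun j _ => sq_nonneg _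
  have ht2 : t ^ 2 = ∑ j : Fin n, x j.succ ^ 2 := Real.sq_sqrt hsumnn
  have hδ2 : δ ^ 2 = x 0 ^ 2 - t ^ 2 := by
    apply Real.sq_sqrt
    have := sq_le_sq' (by linarith) hx
    linarith
  have hpos : 0 < x 0 + δ := by linarith
  have hs2 : (Real.sqrt (2 * (x 0 + δ))) ^ 2 = 2 * (x 0 + δ) :=
    Real.sq_sqrt (by linarith)
  have hsne : Real.sqrt (2 * (x 0 + δ)) ≠ 0 := by
    intro h
    rw [h] at hs2
    simp at hs2
    linarith
  constructor
  · -- trace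
    have htr : (Matrix.vecMulVec β β).trace = ∑ i : Fin (n + 1), β i * β i := by
      simp [Matrix.trace, Matrix.diag, Matrix.vecMulVec_apply]
    rw [htr, Fin.sum_univ_succ]
    have hβ0 : β 0 = (1 / Real.sqrt (2 * (x 0 + δ))) * (x 0 + δ) := by simp [β]
    have hβs : ∀ j : Fin n, β j.succ = (1 / Real.sqrt (2 * (x 0 + δ))) * x j.succ := by
      intro j
      simp [β, Fin.succ_ne_zero]
    rw [hβ0]
    have : ∑ i : Fin n, β i.succ * β i.succ =
        (1 / Real.sqrt (2 * (x 0 + δ)))^2 * ∑ j : Fin n, x j.succ ^ 2 := by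
      rw [Finset.mul_sum]
      refine Finset.sum_congr rfl fun j _ => ?_
      rw [hβs j]; ring
    rw [this, ← ht2]
    have e : 1 / Real.sqrt (2 * (x 0 + δ)) * (x 0 + δ) *
        (1 / Real.sqrt (2 * (x 0 + δ)) * (x 0 + δ)) +
        (1 / Real.sqrt (2 * (x 0 + δ))) ^ 2 * t ^ 2 =
        ((x 0 + δ) ^ 2 + t ^ 2) / (Real.sqrt (2 * (x 0 + δ))) ^ 2 := by
      field_simp
    rw [e, hs2, div_eq_iff (by positivity)]
    nlinarith [hδ2]
  · intro j hj
    have hβ0 : β 0 = (1 / Real.sqrt (2 * (x 0 + δ))) * (x 0 + δ) := by simp [β]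
    have hβj : β j = (1 / Real.sqrt (2 * (x 0 + δ))) * x j := by simp [β, hj]
    rw [Matrix.vecMulVec_apply, hβ0, hβj]
    have : (1 / Real.sqrt (2 * (x 0 + δ))) * (x 0 + δ) *
        ((1 / Real.sqrt (2 * (x 0 + δ))) * x j) =
        (x 0 + δ) * x j / (Real.sqrt (2 * (x 0 + δ)))^2 := by ring
    rw [this, hs2]
    field_simp
end

section
/- Let x ∈ R^n with x_1 > ‖x_{2:n}‖_2 (x in the interior of the Lorentz cone) and set θ = x_1 + ‖x_{2:n}‖ + sqrt((x_1 + ‖x_{2:n}‖)^2 − 4‖x_{2:n}‖^2). Then the matrix MR(x) = [[θ/4, (1/2)x_{2:n}^T],[(1/2)x_{2:n}, ((x_1 − ‖x_{2:n}‖)/(2(n−1)))·I_{n−1} + x_{2:n} x_{2:n}^T/θ]] is positive definite (hence of full rank n), satisfies trace(MR(x)) = x_1, and its (1,j) entry equals x_j/2 for j = 2,...,n. -/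
open Matrix Finset

/-- The Sim–Zhao map MR(x) for x in the interior of the Lorentz cone is positive
definite (hence full rank), has trace x₁, and first-row entries xⱼ/2. -/
theorem sim_zhao_map_posDef {n : ℕ} (hn : 1 ≤ n) (x : Fin (n + 1) → ℝ)
    (hx : tailNorm x < x 0) :
    let t := tailNorm x
    let θ := x 0 + t + Real.sqrt ((x 0 + t) ^ 2 - 4 * t ^ 2)
    let MR : Matrix (Fin (n + 1)) (Fin (n + 1)) ℝ :=
      Matrix.of fun i j =>
        if i = 0 then (if j = 0 then θ / 4 else x j / 2)
        else if j = 0 then x i / 2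
        else (if i = j then (x 0 - t) / (2 * n) else 0) + x i * x j / θ
    MR.PosDef ∧ MR.trace = x 0 ∧ ∀ j : Fin (n + 1), j ≠ 0 → MR 0 j = x j / 2 := by
  intro t θ MR
  have hMR : MR = Matrix.of fun i j =>
      if i = 0 then (if j = 0 then θ / 4 else x j / 2)
      else if j = 0 then x i / 2
      else (if i = j then (x 0 - t) / (2 * n) else 0) + x i * x j / θ := rfl
  have hθdef : θ = x 0 + t + Real.sqrt ((x 0 + t) ^ 2 - 4 * t ^ 2) := rfl
  have ht0 : 0 ≤ t := Real.sqrt_nonneg _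
  have hxt : t < x 0 := hx
  have ht2 : t ^ 2 = ∑ j : Fin n, x j.succ ^ 2 := by
    have : (0:ℝ) ≤ ∑ j : Fin n, x j.succ ^ 2 :=
      Finset.sum_nonneg fun j _ => sq_nonneg _
    simpa [t, tailNorm] using Real.sq_sqrt this
  have hdisc : 0 ≤ (x 0 + t) ^ 2 - 4 * t ^ 2 := by nlinarith
  have hsq : Real.sqrt ((x 0 + t) ^ 2 - 4 * t ^ 2) ^ 2 = (x 0 + t) ^ 2 - 4 * t ^ 2 :=
    Real.sq_sqrt hdisc
  have hsqnn : 0 ≤ Real.sqrt ((x 0 + t) ^ 2 - 4 * t ^ 2) := Real.sqrt_nonneg _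
  have hθpos : 0 < θ := by rw [hθdef]; nlinarith
  have hθeq : θ ^ 2 = 2 * (x 0 + t) * θ - 4 * t ^ 2 := by rw [hθdef]; nlinarith
  clear_value t θ MR
  set c : ℝ := (x 0 - t) / (2 * n) with hc
  have hn' : (0:ℝ) < n := by exact_mod_cast Nat.lt_of_lt_of_le Nat.zero_lt_one hn
  have hcpos : 0 < c := by
    apply div_pos (by linarith) (by linarith)
  -- entries
  have e00 : MR 0 0 = θ / 4 := by simp [hMR]
  have eA : ∀ j : Fin n, MR 0 j.succ = x j.succ / 2 := fun j => by
    simp [hMR, Fin.succ_ne_zero]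
  have eB : ∀ i : Fin n, MR i.succ 0 = x i.succ / 2 := fun i => by
    simp [hMR, Fin.succ_ne_zero]
  have eC : ∀ i j : Fin n, MR i.succ j.succ
      = (if i = j then c else 0) + x i.succ * x j.succ / θ := fun i j => by
    simp [hMR, Fin.succ_ne_zero, Fin.succ_inj]
  have hherm : MR.IsHermitian := by
    rw [Matrix.IsHermitian]
    ext i j
    rcases Fin.eq_zero_or_eq_succ i with rfl | ⟨i, rfl⟩ <;>
      rcases Fin.eq_zero_or_eq_succ j with rfl | ⟨j, rfl⟩
    · simp [Matrix.conjTranspose_apply]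
    · simp [Matrix.conjTranspose_apply, eA, eB]
    · simp [Matrix.conjTranspose_apply, eA, eB]
    · simp only [Matrix.conjTranspose_apply, eC, star_trivial]
      by_cases h : i = j
      · subst h; ring
      · have h' : ¬ j = i := fun e => h e.symm
        rw [if_neg h, if_neg h']; ring
  refine ⟨Matrix.PosDef.of_dotProduct_mulVec_pos hherm ?_, ?_, ?_⟩
  · -- positivity of the quadratic form
    intro v hv
    set a : ℝ := v 0 with ha
    set s : ℝ := ∑ j : Fin n, x j.succ * v j.succ with hs
    set T : ℝ := ∑ j : Fin n, v j.succ ^ 2 with hT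
    have hQ : star v ⬝ᵥ MR *ᵥ v = θ / 4 * a ^ 2 + a * s + (c * T + s ^ 2 / θ) := by
      have hrow0 : (MR *ᵥ v) 0 = θ / 4 * a + s / 2 := by
        simp only [Matrix.mulVec, dotProduct, Fin.sum_univ_succ, e00, eA]
        rw [hs, Finset.sum_div]
        congr 1
        exact Finset.sum_congr rfl fun j _ => by ring
      have hrowi : ∀ i : Fin n, (MR *ᵥ v) i.succ
          = x i.succ / 2 * a + c * v i.succ + x i.succ * s / θ := by
        intro i
        simp only [Matrix.mulVec, dotProduct, Fin.sum_univ_succ, eB, eC]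
        have : ∑ j : Fin n, ((if i = j then c else 0) + x i.succ * x j.succ / θ) * v j.succ
            = c * v i.succ + x i.succ * s / θ := by
          rw [show (fun j => ((if i = j then c else 0) + x i.succ * x j.succ / θ) * v j.succ)
              = fun j => (if i = j then c * v j.succ else 0)
                + (x i.succ / θ) * (x j.succ * v j.succ) from funext fun j : Fin n => by
            by_cases h : i = j <;> simp [h] <;> ring]
          rw [Finset.sum_add_distrib, Finset.sum_ite_eq, ← Finset.mul_sum, ← hs]
          simp; ring
        rw [this]; ring
      have : star v ⬝ᵥ MR *ᵥ v = a * (θ / 4 * a + s / 2)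
          + ∑ i : Fin n, v i.succ * (x i.succ / 2 * a + c * v i.succ + x i.succ * s / θ) := by
        simp only [dotProduct, Pi.star_apply, star_trivial, Fin.sum_univ_succ,
          hrow0, hrowi, ha]
      rw [this]
      have : ∑ i : Fin n, v i.succ * (x i.succ / 2 * a + c * v i.succ + x i.succ * s / θ)
          = (a / 2) * s + c * T + s * s / θ := by
        rw [show (fun i : Fin n => v i.succ * (x i.succ / 2 * a + c * v i.succ + x i.succ * s / θ))
            = fun i : Fin n => (a / 2) * (x i.succ * v i.succ) + c * (v i.succ ^ 2)
              + (s / θ) * (x i.succ * v i.succ) from funext fun i : Fin n => by ring]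
        rw [Finset.sum_add_distrib, Finset.sum_add_distrib, ← Finset.mul_sum,
          ← Finset.mul_sum, ← Finset.mul_sum, ← hs, ← hT]
        ring
      rw [this]; ring
    rw [hQ]
    have hTnn : 0 ≤ T := Finset.sum_nonneg fun j _ => sq_nonneg _
    by_cases hT0 : T = 0
    · have hz : ∀ j : Fin n, v j.succ = 0 := by
        intro j
        have hsum0 : ∑ j : Fin n, v j.succ ^ 2 = 0 := hT ▸ hT0
        have := (Finset.sum_eq_zero_iff_of_nonneg
          (fun (j : Fin n) (_ : j ∈ Finset.univ) => sq_nonneg (v j.succ))).mp hsum0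
        exact pow_eq_zero_iff (by norm_num) |>.mp (this j (Finset.mem_univ j))
      have hs0 : s = 0 := by
        rw [hs]; exact Finset.sum_eq_zero fun j _ => by rw [hz j, mul_zero]
      have ha0 : a ≠ 0 := by
        intro h
        apply hv
        funext i
        rcases Fin.eq_zero_or_eq_succ i with rfl | ⟨i, rfl⟩
        · exact h
        · exact hz i
      rw [hs0, hT0]
      have h2 : 0 < a ^ 2 := lt_of_le_of_ne (sq_nonneg a) (Ne.symm (pow_ne_zero 2 ha0))
      have h3 : ((0:ℝ)) ^ 2 / θ = 0 := by simp
      nlinarith [hθpos]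
    · have hTpos : 0 < T := lt_of_le_of_ne hTnn (Ne.symm hT0)
      have key : θ / 4 * a ^ 2 + a * s + (c * T + s ^ 2 / θ)
          = (θ * a + 2 * s) ^ 2 / (4 * θ) + c * T := by
        field_simp; ring
      rw [key]
      have h1 : 0 ≤ (θ * a + 2 * s) ^ 2 / (4 * θ) := by positivity
      have h2 : 0 < c * T := mul_pos hcpos hTpos
      linarith
  · -- trace
    have hsum : ∑ i : Fin n, x i.succ * x i.succ / θ = t ^ 2 / θ := by
      rw [ht2, Finset.sum_div]
      exact Finset.sum_congr rfl fun i _ => by ring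
    have h1 : MR.trace = MR 0 0 + ∑ i : Fin n, MR i.succ i.succ := by
      rw [Matrix.trace, Fin.sum_univ_succ]; rfl
    have h2 : ∑ i : Fin n, MR i.succ i.succ = (n : ℝ) * c + t ^ 2 / θ := by
      calc ∑ i : Fin n, MR i.succ i.succ
          = ∑ i : Fin n, (c + x i.succ * x i.succ / θ) :=
            Finset.sum_congr rfl fun i _ => by rw [eC]; simp
        _ = (n : ℝ) * c + t ^ 2 / θ := by
            rw [Finset.sum_add_distrib, Finset.sum_const, Finset.card_univ,
              Fintype.card_fin, hsum, nsmul_eq_mul]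
    rw [h1, e00, h2]
    have hnc : (n : ℝ) * c = (x 0 - t) / 2 := by
      rw [hc]; field_simp
    rw [hnc]
    have hθne : θ ≠ 0 := ne_of_gt hθpos
    have hkey : t ^ 2 / θ = (x 0 + t) / 2 - θ / 4 := by
      rw [div_eq_iff hθne]
      linear_combination hθeq / 4
    rw [hkey]; ring
  · intro j hj
    simp [hMR, hj]
end

section
/- Let x, s ∈ L^n ⊆ R^n be vectors in the second-order cone. Then x^T s = 0 if and only if the Jordan product x ∘ s = 0, i.e., x^T s = 0 and x_1 s_{2:n} + s_1 x_{2:n} = 0. -/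
open Matrix Finset

lemma tailNorm_nonneg {n : ℕ} (x : Fin (n + 1) → ℝ) : 0 ≤ tailNorm x :=
  Real.sqrt_nonneg _

/-- For x, s in the second-order cone, xᵀs = 0 iff the Jordan product x ∘ s = 0. -/
theorem soco_complementarity_iff {n : ℕ} (x s : Fin (n + 1) → ℝ)
    (hx : tailNorm x ≤ x 0) (hs : tailNorm s ≤ s 0) :
    (∑ i, x i * s i = 0) ↔
      (∑ i, x i * s i = 0 ∧
        ∀ j : Fin (n + 1), j ≠ 0 → x 0 * s j + s 0 * x j = 0) := by
  constructor
  · intro h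
    refine ⟨h, ?_⟩
    set u : EuclideanSpace ℝ (Fin n) := WithLp.toLp 2 (fun j : Fin n => x j.succ) with hu
    set v : EuclideanSpace ℝ (Fin n) := WithLp.toLp 2 (fun j : Fin n => s j.succ) with hv
    have hxn : tailNorm x = ‖u‖ := by
      rw [EuclideanSpace.norm_eq, tailNorm]
      congr 1
      exact Finset.sum_congr rfl fun j _ => by rw [Real.norm_eq_abs, sq_abs]
    have hsn : tailNorm s = ‖v‖ := by
      rw [EuclideanSpace.norm_eq, tailNorm]
      congr 1
      exact Finset.sum_congr rfl fun j _ => by rw [Real.norm_eq_abs, sq_abs]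
    have hinner : inner ℝ u v = - (x 0 * s 0) := by
      rw [Fin.sum_univ_succ] at h
      have : (inner ℝ u v : ℝ) = ∑ j : Fin n, x j.succ * s j.succ := by
        simp [PiLp.inner_apply, RCLike.inner_apply, hu, hv, mul_comm]
      linarith
    have hun : 0 ≤ ‖u‖ := norm_nonneg u
    have hvn : 0 ≤ ‖v‖ := norm_nonneg v
    have hx0 : 0 ≤ x 0 := le_trans (tailNorm_nonneg x) hx
    have hs0 : 0 ≤ s 0 := le_trans (tailNorm_nonneg s) hs
    have hcs : (inner ℝ u v : ℝ) ≥ -(‖u‖ * ‖v‖) := by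
      have := abs_real_inner_le_norm u v
      have := abs_le.mp this
      linarith [this.1]
    have hnn : ‖u‖ * ‖v‖ ≤ x 0 * s 0 :=
      mul_le_mul (hxn ▸ hx) (hsn ▸ hs) hvn hx0
    have heq : ‖u‖ * ‖v‖ = x 0 * s 0 := by
      rw [hinner] at hcs; linarith
    -- case split
    have key : ∀ j : Fin n, x 0 * s j.succ + s 0 * x j.succ = 0 := by
      rcases eq_or_lt_of_le hx0 with h0 | hx0p
      · -- x 0 = 0, so u = 0
        have hu0 : ‖u‖ = 0 := le_antisymm (by rw [← hxn]; linarith) hun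
        have : u = 0 := norm_eq_zero.mp hu0
        intro j
        have hxj : x j.succ = 0 := by
          have := congrArg (fun w => w j) this; simpa [hu] using this
        rw [← h0, hxj]; ring
      rcases eq_or_lt_of_le hs0 with h0 | hs0p
      · have hv0 : ‖v‖ = 0 := le_antisymm (by rw [← hsn]; linarith) hvn
        have : v = 0 := norm_eq_zero.mp hv0
        intro j
        have hsj : s j.succ = 0 := by
          have := congrArg (fun w => w j) this; simpa [hv] using this
        rw [← h0, hsj]; ring
      -- both positive
      have hup : 0 < ‖u‖ := by
        by_contra hc
        push_neg at hc
        have : ‖u‖ = 0 := le_antisymm hc hun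
        rw [this] at heq
        nlinarith
      have hvp : 0 < ‖v‖ := by
        by_contra hc
        push_neg at hc
        have : ‖v‖ = 0 := le_antisymm hc hvn
        rw [this] at heq
        nlinarith
      have hux : ‖u‖ = x 0 := by
        have h1 : ‖u‖ ≤ x 0 := hxn ▸ hx
        have h2 : ‖v‖ ≤ s 0 := hsn ▸ hs
        nlinarith
      have hvs : ‖v‖ = s 0 := by
        have h1 : ‖u‖ ≤ x 0 := hxn ▸ hx
        nlinarith
      -- equality case of Cauchy-Schwarz for u and -v
      have hieq : (inner ℝ u (-v) : ℝ) = ‖u‖ * ‖-v‖ := by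
        rw [inner_neg_right, hinner, norm_neg, heq]; ring
      have := (inner_eq_norm_mul_iff_real).mp hieq
      -- ‖-v‖ • u = ‖u‖ • (-v)
      intro j
      have hj := congrArg (fun w => w j) this
      simp only [norm_neg, PiLp.smul_apply, PiLp.neg_apply, smul_eq_mul] at hj
      have hjx : ‖v‖ * x j.succ = ‖u‖ * (- s j.succ) := hj
      rw [hux, hvs] at hjx
      linarith
    intro j hj
    rcases Fin.eq_succ_of_ne_zero hj with ⟨k, rfl⟩
    exact key k
  · exact fun h => h.1
end

section
/- Let x ∈ R^n lie on the boundary of the second-order cone, i.e., x_1 = ‖x_{2:n}‖_2. Then every symmetric PSD matrix X satisfying Σ_i X_{ii} = x_1 and X_{1j} = x_j/2 for j = 2,...,n has rank at most 1; if x ≠ 0 it has rank exactly 1. -/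
open Matrix Finset

lemma rank_ne_zero_of_ne_zero {n : ℕ} (X : Matrix (Fin (n+1)) (Fin (n+1)) ℝ) (h : X ≠ 0) :
    X.rank ≠ 0 := by
  intro h0
  rw [Matrix.rank, Submodule.finrank_eq_zero] at h0
  apply h
  ext i j
  have := LinearMap.mem_range_self X.mulVecLin (Pi.single j 1)
  rw [h0, Submodule.mem_bot] at this
  have := congrFun this i
  simpa [Matrix.mulVecLin, Matrix.mulVec_single] using this


/-- For x on the boundary of the Lorentz cone, every admissible symmetric PSD X
has rank at most 1, and rank exactly 1 when x ≠ 0. -/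
theorem boundary_rank_le_one {n : ℕ} (x : Fin (n + 1) → ℝ)
    (hb : tailNorm x = x 0)
    (X : Matrix (Fin (n + 1)) (Fin (n + 1)) ℝ) (hsym : X.IsSymm) (hpsd : X.PosSemidef)
    (htr : X.trace = x 0) (h1 : ∀ j : Fin (n + 1), j ≠ 0 → X 0 j = x j / 2) :
    X.rank ≤ 1 ∧ (x ≠ 0 → X.rank = 1) := by
  obtain ⟨B, hB⟩ : ∃ B : Matrix (Fin (n + 1)) (Fin (n + 1)) ℝ, X = Bᴴ * B := by
    open scoped MatrixOrder in
    obtain ⟨B, hB⟩ := CStarAlgebra.nonneg_iff_eq_star_mul_self.mp hpsd.nonneg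
    exact ⟨B, hB⟩
  have hent : ∀ i j, X i j = ∑ k, B k i * B k j := by
    intro i j
    rw [hB]
    simp [Matrix.mul_apply, Matrix.conjTranspose_apply]
  have hSnn : (0:ℝ) ≤ ∑ j : Fin n, x j.succ ^ 2 :=
    Finset.sum_nonneg fun _ _ => sq_nonneg _
  have hx0nn : 0 ≤ x 0 := hb ▸ Real.sqrt_nonneg _
  have htr' : X 0 0 + ∑ j : Fin n, X j.succ j.succ = x 0 := by
    have h' : ∑ i, X i i = x 0 := htr
    rwa [Fin.sum_univ_succ] at h'
  by_cases hx : x 0 = 0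
  · -- x = 0 case
    have hsum0 : ∑ j : Fin n, x j.succ ^ 2 = 0 := by
      have : Real.sqrt (∑ j : Fin n, x j.succ ^ 2) = 0 := by rw [← tailNorm, hb, hx]
      nlinarith [Real.sq_sqrt hSnn]
    have hxz : x = 0 := by
      funext i
      refine Fin.cases ?_ ?_ i
      · exact hx
      · intro j
        have := (Finset.sum_eq_zero_iff_of_nonneg (fun i _ => sq_nonneg (x i.succ))).mp hsum0 j
          (Finset.mem_univ _)
        simpa using pow_eq_zero_iff (n := 2) (by norm_num) |>.mp this
    have hBz : B = 0 := by
      have htr0 : ∑ i, ∑ k, B k i * B k i = 0 := by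
        have h9 : ∑ i, X i i = (0:ℝ) := by
          have h' : ∑ i, X i i = x 0 := htr
          rw [h', hx]
        calc ∑ i, ∑ k, B k i * B k i = ∑ i, X i i := by
              exact Finset.sum_congr rfl fun i _ => (hent i i).symm
          _ = 0 := h9
      have h4 : ∀ i ∈ Finset.univ, (0:ℝ) ≤ ∑ k, B k i * B k i :=
        fun i _ => Finset.sum_nonneg fun k _ => mul_self_nonneg _
      ext k i
      have h5 := (Finset.sum_eq_zero_iff_of_nonneg h4).mp htr0 i (Finset.mem_univ _)
      have h6 := (Finset.sum_eq_zero_iff_of_nonneg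
        (fun k (_ : k ∈ Finset.univ) => mul_self_nonneg (B k i))).mp h5 k (Finset.mem_univ _)
      simpa [mul_self_eq_zero] using h6
    have hXz : X = 0 := by rw [hB, hBz]; simp
    rw [hXz]
    exact ⟨by simp, fun hne => absurd hxz hne⟩
  · -- x 0 > 0 case
    have hpos : 0 < x 0 := lt_of_le_of_ne hx0nn (Ne.symm hx)
    have hS : ∑ j : Fin n, x j.succ ^ 2 = (x 0) ^ 2 := by
      have := Real.sq_sqrt hSnn
      rw [← tailNorm, hb] at this
      linarith
    -- Cauchy-Schwarz per index
    have hCS : ∀ j : Fin n, (X 0 j.succ) ^ 2 ≤ X 0 0 * X j.succ j.succ := by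
      intro j
      rw [hent, hent, hent]
      calc (∑ k, B k 0 * B k j.succ) ^ 2
          ≤ (∑ k, (B k 0) ^ 2) * ∑ k, (B k j.succ) ^ 2 :=
            Finset.sum_mul_sq_le_sq_mul_sq _ _ _
        _ = (∑ k, B k 0 * B k 0) * ∑ k, B k j.succ * B k j.succ := by
            simp only [pow_two]
    have h0j : ∀ j : Fin n, X 0 j.succ = x j.succ / 2 := fun j =>
      h1 j.succ (Fin.succ_ne_zero j)
    have hsum02 : ∑ j : Fin n, (X 0 j.succ) ^ 2 = (x 0) ^ 2 / 4 := by
      have : ∀ j : Fin n, (X 0 j.succ) ^ 2 = x j.succ ^ 2 / 4 := by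
        intro j; rw [h0j j]; ring
      rw [Finset.sum_congr rfl fun j _ => this j, ← Finset.sum_div, hS]
    have hTailSum : ∑ j : Fin n, X j.succ j.succ = x 0 - X 0 0 := by linarith
    have hsumCS : ∑ j : Fin n, (X 0 j.succ) ^ 2 ≤ X 0 0 * (x 0 - X 0 0) := by
      rw [← hTailSum, Finset.mul_sum]
      exact Finset.sum_le_sum fun j _ => hCS j
    have hX00 : X 0 0 = x 0 / 2 := by nlinarith
    -- each CS is an equality
    have hdiag : ∀ j : Fin n, X j.succ j.succ = x j.succ ^ 2 / (2 * x 0) := by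
      intro j
      have hsums : ∑ j : Fin n, (X 0 j.succ) ^ 2 = ∑ j : Fin n, X 0 0 * X j.succ j.succ := by
        rw [hsum02, ← Finset.mul_sum, hTailSum, hX00]
        ring
      have heq := (Finset.sum_eq_sum_iff_of_le (fun j (_ : j ∈ Finset.univ) => hCS j)).mp hsums
      have this := heq j (Finset.mem_univ _)
      rw [h0j j, hX00] at this
      field_simp at this ⊢
      linarith
    -- columns are proportional
    have hBcol : ∀ (i : Fin (n+1)) (k : Fin (n+1)), B k i = x i / x 0 * B k 0 := by
      intro i
      refine Fin.cases ?_ ?_ i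
      · intro k; rw [div_self hx, one_mul]
      · intro j k
        set t := x j.succ / x 0 with ht
        have hz : ∑ m, (B m j.succ - t * B m 0) ^ 2 = 0 := by
          have hexp : ∑ m, (B m j.succ - t * B m 0) ^ 2 =
              (∑ m, B m j.succ * B m j.succ) - 2 * t * (∑ m, B m 0 * B m j.succ)
                + t ^ 2 * (∑ m, B m 0 * B m 0) := by
            rw [Finset.mul_sum, Finset.mul_sum, ← Finset.sum_sub_distrib,
              ← Finset.sum_add_distrib]
            exact Finset.sum_congr rfl fun m _ => by ring
          rw [hexp, ← hent, ← hent, ← hent, hdiag j, h0j j, hX00, ht]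
          field_simp
          ring
        have := (Finset.sum_eq_zero_iff_of_nonneg
          (fun m (_ : m ∈ Finset.univ) => sq_nonneg (B m j.succ - t * B m 0))).mp hz k
          (Finset.mem_univ _)
        have h7 := pow_eq_zero_iff (n := 2) (by norm_num) |>.mp this
        linarith [sub_eq_zero.mp h7]
    have hXij : ∀ i j, X i j = x i * x j / (2 * x 0) := by
      intro i j
      rw [hent]
      have : ∀ k, B k i * B k j = (x i / x 0) * (x j / x 0) * (B k 0 * B k 0) := by
        intro k; rw [hBcol i k, hBcol j k]; ring
      rw [Finset.sum_congr rfl fun k _ => this k, ← Finset.mul_sum, ← hent, hX00]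
      field_simp
    have hXeq : X = Matrix.replicateCol Unit ((2 * x 0)⁻¹ • x) * Matrix.replicateRow Unit x := by
      ext i j
      rw [hXij i j]
      simp only [Matrix.mul_apply, Matrix.replicateCol_apply, Matrix.replicateRow_apply, Pi.smul_apply,
        smul_eq_mul, Finset.univ_unique, Finset.sum_singleton]
      rw [div_eq_mul_inv]
      ring
    have hle : X.rank ≤ 1 := by
      calc X.rank ≤ (Matrix.replicateCol Unit ((2 * x 0)⁻¹ • x)).rank := by
              rw [hXeq]; exact Matrix.rank_mul_le_left _ _
        _ ≤ Fintype.card Unit := Matrix.rank_le_card_width _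
        _ = 1 := by simp
    refine ⟨hle, fun _ => ?_⟩
    have hne : X ≠ 0 := by
      intro h0
      have h8 := hXij 0 0
      rw [h0] at h8
      simp only [Matrix.zero_apply] at h8
      have h9 : x 0 * x 0 / (2 * x 0) = x 0 / 2 := by
        field_simp
      rw [h9] at h8
      linarith
    have := rank_ne_zero_of_ne_zero X hne
    omega
end

section
/- Let s ∈ R^n with s ≠ 0 and s_1 ≥ ‖s_{2:n}‖_2, δ' = sqrt(s_1^2 − ‖s_{2:n}‖_2^2), and η = (1/sqrt(2(s_1 + δ')))·(s_1 + δ', s_2, ..., s_n)^T. Define u_k = η_k^2 − s_1/n for k = 2,...,n and w_{hl} = η_h η_l for 2 ≤ h < l ≤ n. Then the matrix S with S_{11} = s_1/n − Σ_{k=2}^n u_k, S_{1j} = S_{j1} = s_j/2 for j ≥ 2, S_{kk} = s_1/n + u_k for k ≥ 2, and S_{hl} = S_{lh} = −(−w_{hl}) = w_{hl} for 2 ≤ h < l equals η η^T, hence is PSD of rank one (when s ≠ 0), with trace(S) = s_1. -/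
open Matrix Finset

lemma vecMulVec_self_mulVec {m : ℕ} (η x : Fin m → ℝ) :
    (Matrix.vecMulVec η η) *ᵥ x = (η ⬝ᵥ x) • η := by
  funext i
  simp [Matrix.mulVec, Matrix.vecMulVec_apply, dotProduct, Finset.mul_sum,
    mul_comm, mul_left_comm]

lemma posSemidef_vecMulVec_self {m : ℕ} (η : Fin m → ℝ) :
    (Matrix.vecMulVec η η).PosSemidef := by
  have h := Matrix.posSemidef_conjTranspose_mul_self (Matrix.replicateRow (Fin 1) η)
  have : (Matrix.replicateRow (Fin 1) η)ᴴ * (Matrix.replicateRow (Fin 1) η) = Matrix.vecMulVec η η := by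
    ext i j
    simp [Matrix.mul_apply, Matrix.vecMulVec_apply, Matrix.replicateRow_apply, Matrix.conjTranspose_apply]
  rwa [this] at h

lemma rank_vecMulVec_self {m : ℕ} (η : Fin m → ℝ) (hη : η ≠ 0) :
    (Matrix.vecMulVec η η).rank = 1 := by
  have hd : η ⬝ᵥ η ≠ 0 := by
    simpa [dotProduct_self_eq_zero] using hη
  have hrange : LinearMap.range (Matrix.vecMulVec η η).mulVecLin = ℝ ∙ η := by
    apply le_antisymm
    · rintro _ ⟨x, rfl⟩
      rw [Matrix.mulVecLin_apply, vecMulVec_self_mulVec]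
      exact Submodule.smul_mem _ _ (Submodule.mem_span_singleton_self η)
    · rw [Submodule.span_singleton_le_iff_mem]
      refine ⟨(η ⬝ᵥ η)⁻¹ • η, ?_⟩
      rw [LinearMap.map_smul, Matrix.mulVecLin_apply, vecMulVec_self_mulVec, smul_smul,
        inv_mul_cancel₀ hd, one_smul]
  rw [Matrix.rank, hrange, finrank_span_singleton hη]

/-- The primal-side rank-one mapping: the matrix S assembled from s via u and w
equals the rank-one outer product ηηᵀ, is PSD of rank one, and has trace s₁. -/
theorem primal_rank_one_map {n : ℕ} (s : Fin (n + 1) → ℝ)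
    (hs0 : s ≠ 0) (hs : tailNorm s ≤ s 0) :
    let δ' := Real.sqrt ((s 0) ^ 2 - (tailNorm s) ^ 2)
    let η : Fin (n + 1) → ℝ :=
      fun i => (1 / Real.sqrt (2 * (s 0 + δ'))) * (if i = 0 then s 0 + δ' else s i)
    let u : Fin (n + 1) → ℝ := fun k => (η k) ^ 2 - s 0 / (n + 1)
    let w : Fin (n + 1) → Fin (n + 1) → ℝ := fun h l => η h * η l
    let S : Matrix (Fin (n + 1)) (Fin (n + 1)) ℝ :=
      Matrix.of fun i j =>
        if i = 0 then
          (if j = 0 then s 0 / (n + 1) - ∑ k ∈ Finset.univ.erase 0, u k else s j / 2)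
        else if j = 0 then s i / 2
        else if i = j then s 0 / (n + 1) + u i
        else w i j
    S = Matrix.vecMulVec η η ∧ S.PosSemidef ∧ S.rank = 1 ∧ S.trace = s 0 := by
  intro δ' η u w S
  have ht0 : (0:ℝ) ≤ tailNorm s := Real.sqrt_nonneg _
  have ha0 : (0:ℝ) ≤ s 0 := le_trans ht0 hs
  have hsumsq : (0:ℝ) ≤ ∑ j : Fin n, s j.succ ^ 2 :=
    Finset.sum_nonneg fun j _ => sq_nonneg _
  have ht2 : tailNorm s ^ 2 = ∑ j : Fin n, s j.succ ^ 2 := Real.sq_sqrt hsumsq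
  have ha : (0:ℝ) < s 0 := by
    rcases ha0.lt_or_eq with h | h
    · exact h
    · exfalso
      apply hs0
      have ht : tailNorm s = 0 := le_antisymm (h ▸ hs) ht0
      have hsum0 : ∑ j : Fin n, s j.succ ^ 2 = 0 := by
        rw [← ht2, ht]; ring
      have hz : ∀ j : Fin n, s j.succ ^ 2 = 0 :=
        fun j => (Finset.sum_eq_zero_iff_of_nonneg (fun j _ => sq_nonneg _)).1 hsum0 j
          (Finset.mem_univ j)
      funext i
      refine Fin.cases ?_ (fun j => ?_) i
      · exact h.symm
      · have := hz j
        simpa [pow_eq_zero_iff] using this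
  have hδ0 : (0:ℝ) ≤ δ' := Real.sqrt_nonneg _
  have hδ2 : δ' ^ 2 = s 0 ^ 2 - tailNorm s ^ 2 := Real.sq_sqrt (by nlinarith)
  have hc : (0:ℝ) < s 0 + δ' := by linarith
  have hr : Real.sqrt (2 * (s 0 + δ')) ^ 2 = 2 * (s 0 + δ') := Real.sq_sqrt (by linarith)
  have hrpos : (0:ℝ) < Real.sqrt (2 * (s 0 + δ')) := Real.sqrt_pos.2 (by linarith)
  have hη0 : η 0 = (s 0 + δ') / Real.sqrt (2 * (s 0 + δ')) := by
    simp only [η, eq_self_iff_true, if_true]; ring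
  have hηs : ∀ i : Fin (n + 1), i ≠ 0 → η i = s i / Real.sqrt (2 * (s 0 + δ')) := by
    intro i hi
    simp only [η, if_neg hi]; ring
  have hsum : ∑ i : Fin (n + 1), η i ^ 2 = s 0 := by
    rw [Fin.sum_univ_succ]
    have h1 : ∀ j : Fin n, η j.succ ^ 2 = s j.succ ^ 2 / (2 * (s 0 + δ')) := by
      intro j
      rw [hηs j.succ (Fin.succ_ne_zero j), div_pow, hr]
    simp only [h1, hη0]
    rw [div_pow, hr, ← Finset.sum_div, ← ht2, ← add_div,
      div_eq_iff (by linarith : (2 * (s 0 + δ')) ≠ 0)]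
    nlinarith [hδ2]
  have hη0sq : η 0 ^ 2 = (s 0 + δ') / 2 := by
    rw [hη0, div_pow, hr]
    field_simp
  have hSη : S = Matrix.vecMulVec η η := by
    funext i j
    simp only [S, Matrix.of_apply, Matrix.vecMulVec_apply]
    by_cases hi : i = 0
    · subst hi
      by_cases hj : j = 0
      · subst hj
        simp only [eq_self_iff_true, if_true]
        have hcard : (Finset.univ.erase (0 : Fin (n + 1))).card = n := by
          simp [Finset.card_erase_of_mem]
        have hu : ∑ k ∈ Finset.univ.erase 0, u k
            = (∑ k ∈ Finset.univ.erase 0, η k ^ 2) - n * (s 0 / (n + 1)) := by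
          simp only [u, Finset.sum_sub_distrib, Finset.sum_const, hcard, nsmul_eq_mul]
        have herase : ∑ k ∈ Finset.univ.erase 0, η k ^ 2 = s 0 - η 0 ^ 2 := by
          have h := Finset.sum_erase_add Finset.univ (fun k => η k ^ 2)
            (Finset.mem_univ (0 : Fin (n + 1)))
          rw [hsum] at h
          linarith
        rw [hu, herase]
        have hn1 : ((n : ℝ) + 1) ≠ 0 := by positivity
        have hsplit : s 0 / ((n : ℝ) + 1) + n * (s 0 / ((n : ℝ) + 1)) = s 0 := by
          field_simp; ring
        rw [← pow_two]
        linarith [hsplit]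
      · simp only [eq_self_iff_true, if_true, if_neg hj]
        rw [hη0, hηs j hj, div_mul_div_comm,
          Real.mul_self_sqrt (by linarith : (0:ℝ) ≤ 2 * (s 0 + δ'))]
        field_simp
    · by_cases hj : j = 0
      · subst hj
        simp only [if_neg hi, eq_self_iff_true, if_true]
        rw [hη0, hηs i hi, div_mul_div_comm,
          Real.mul_self_sqrt (by linarith : (0:ℝ) ≤ 2 * (s 0 + δ'))]
        field_simp
      · by_cases hij : i = j
        · subst hij
          simp only [if_neg hi, eq_self_iff_true, if_true, u]
          ring
        · simp only [if_neg hi, if_neg hj, if_neg hij, w]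
  have hηne : η ≠ 0 := by
    intro h
    have h0 : η 0 = 0 := by rw [h]; rfl
    have hpos : 0 < η 0 := by rw [hη0]; exact div_pos hc hrpos
    linarith
  refine ⟨hSη, ?_, ?_, ?_⟩
  · rw [hSη]; exact posSemidef_vecMulVec_self η
  · rw [hSη]; exact rank_vecMulVec_self η hηne
  · rw [hSη]
    simpa [Matrix.trace, Matrix.diag, Matrix.vecMulVec_apply, ← sq] using hsum
end

section
/- Let x = (1, u) and s = (1, −u) with u ∈ R^{n−1}, ‖u‖_2 = 1. Then Arw(x) and Arw(s) are both PSD and x ∘ s = 0 (Jordan complementarity), but trace(Arw(x)Arw(s)) = trace(I_{n−1} − u u^T) = n − 2, which is nonzero for n ≥ 3. Hence the arrow-head transformation does not preserve complementarity. -/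
open Matrix Finset

lemma arw_herm {n : ℕ} (x : Fin (n + 1) → ℝ) : (Arw x).IsHermitian := by
  ext i j
  simp only [Arw, Matrix.conjTranspose_apply, Matrix.of_apply, RCLike.star_def, starRingEnd_apply,
    star_trivial]
  by_cases hi : i = 0 <;> by_cases hj : j = 0 <;> simp [hi, hj, eq_comm]

lemma arw_quad {n : ℕ} (u : Fin n → ℝ) (hu : ∑ j : Fin n, u j ^ 2 = 1)
    (v : Fin (n + 1) → ℝ) : 0 ≤ v ⬝ᵥ (Arw (Fin.cons 1 u) *ᵥ v) := by
  have hform : v ⬝ᵥ (Arw (Fin.cons 1 u) *ᵥ v)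
      = v 0 ^ 2 + 2 * v 0 * (∑ k : Fin n, u k * v k.succ) + ∑ k : Fin n, v k.succ ^ 2 := by
    simp [dotProduct, Matrix.mulVec, Arw, Fin.sum_univ_succ, Fin.succ_ne_zero, Fin.succ_inj,
      ite_mul, mul_ite, Finset.sum_ite_eq, Finset.mul_sum, Finset.sum_add_distrib, mul_add]
    have e1 : ∑ x : Fin n, v x.succ * v x.succ = ∑ x : Fin n, v x.succ ^ 2 :=
      Finset.sum_congr rfl fun x _ => (sq (v x.succ)).symm
    have e2 : (∑ x : Fin n, v 0 * (u x * v x.succ)) + ∑ x : Fin n, v x.succ * (u x * v 0)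
        = ∑ x : Fin n, 2 * v 0 * (u x * v x.succ) := by
      rw [← Finset.sum_add_distrib]; exact Finset.sum_congr rfl fun x _ => by ring
    linarith [e1, e2]
  have key : (∑ k : Fin n, u k * v k.succ) ^ 2 ≤ ∑ k : Fin n, v k.succ ^ 2 := by
    nlinarith [Finset.sum_mul_sq_le_sq_mul_sq Finset.univ u (fun k => v k.succ), hu]
  rw [hform]
  nlinarith [sq_nonneg (v 0 + ∑ k : Fin n, u k * v k.succ)]

/-- For x = (1, u), s = (1, −u) with ‖u‖ = 1: Arw(x) and Arw(s) are PSD, the Jordan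
product x ∘ s = 0, yet trace(Arw(x)·Arw(s)) = (n+1) − 2, nonzero when the dimension
n+1 ≥ 3. Hence the arrow-head transformation does not preserve complementarity. -/
theorem arw_does_not_preserve_complementarity {n : ℕ} (u : Fin n → ℝ)
    (hu : ∑ j : Fin n, u j ^ 2 = 1) :
    let x : Fin (n + 1) → ℝ := Fin.cons 1 u
    let s : Fin (n + 1) → ℝ := Fin.cons 1 (-u)
    (Arw x).PosSemidef ∧ (Arw s).PosSemidef ∧
      (∑ i, x i * s i = 0 ∧ ∀ j : Fin (n + 1), j ≠ 0 → x 0 * s j + s 0 * x j = 0) ∧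
      (Arw x * Arw s).trace = (n : ℝ) - 1 ∧
      (2 ≤ n → (Arw x * Arw s).trace ≠ 0) := by
  intro x s
  have hu' : ∑ j : Fin n, (-u) j ^ 2 = 1 := by simpa using hu
  have htr : (Arw x * Arw s).trace = (n : ℝ) - 1 := by
    simp [x, s, Matrix.trace, Matrix.diag, Matrix.mul_apply, Arw, Fin.sum_univ_succ,
      Fin.succ_ne_zero, Fin.succ_inj, ite_mul, mul_ite, Finset.sum_ite_eq,
      Finset.sum_add_distrib, ← sq, hu]
    ring
  refine ⟨Matrix.PosSemidef.of_dotProduct_mulVec_nonneg (arw_herm x) (fun v => by simpa using arw_quad u hu v),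
    Matrix.PosSemidef.of_dotProduct_mulVec_nonneg (arw_herm s) (fun v => by simpa using arw_quad (-u) hu' v), ⟨?_, ?_⟩, htr, ?_⟩
  · simp [x, s, Fin.sum_univ_succ, ← sq, hu]
  · intro j hj
    induction j using Fin.cases with
    | zero => exact absurd rfl hj
    | succ k => simp [x, s]
  · intro hn
    rw [htr]
    have : (2 : ℝ) ≤ (n : ℝ) := by exact_mod_cast hn
    linarith
end
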